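/- arXiv:1811.12849 — 3 statements merged into one kernel-verified Lean document; each statement's English description precedes it below -/
import Mathlib

section
/- Let H be a Hilbert space and A, B bounded operators on H with range(A) ⊆ range(B). Then there exists a unique bounded operator C on H with A = BC, null(C) = null(A), and range(C) ⊆ closure(range(B*)). Moreover ‖C‖² = inf{ μ ≥ 0 : AA* ≤ μ BB* }. -/
/-!
Restricted to `(ker B)ᗮ`, the operator `B` is injective and still has range `range B`, so
`C y` can be taken to be the unique preimage of `A y` in `(ker B)ᗮ`; this is linear, and its
graph `{(y, z) | z ∈ (ker B)ᗮ, B z = A y}` is closed, so `C` is bounded by the closed graph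
theorem. Since `(ker B)ᗮ = closure (range B*)`, the range condition singles out this `C`.

For the norm, `re ⟪A A* x, x⟫ = ‖A* x‖²` and `A* = C* B*` give `‖A* x‖ ≤ ‖C‖ ‖B* x‖`.
Conversely, if `‖A* x‖ ≤ c ‖B* x‖` for all `x`, then `⟪C y, B* x⟫ = ⟪y, A* x⟫` has modulus at most
`c ‖y‖ ‖B* x‖`, and as `C y` lies in the closure of `range B*` this forces `‖C y‖ ≤ c ‖y‖`.
-/

theorem norm_le_of_mem_closure_of_norm_inner_le {𝕜 E : Type*} [RCLike 𝕜] [NormedAddCommGroup E]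
    [InnerProductSpace 𝕜 E] {s : Set E} {z : E} {c : ℝ} (hc : 0 ≤ c) (hz : z ∈ closure s)
    (h : ∀ w ∈ s, ‖inner 𝕜 z w‖ ≤ c * ‖w‖) : ‖z‖ ≤ c := by
  have hclosed : IsClosed {w : E | ‖inner 𝕜 z w‖ ≤ c * ‖w‖} :=
    isClosed_le (continuous_const.inner continuous_id).norm (continuous_const.mul continuous_norm)
  have hzz : ‖z‖ * ‖z‖ ≤ c * ‖z‖ := by
    rw [← inner_self_eq_norm_mul_norm (𝕜 := 𝕜), inner_self_re_eq_norm]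
    exact closure_minimal h hclosed hz
  rcases (norm_nonneg z).eq_or_lt with hz0 | hz0
  · rwa [← hz0]
  · exact le_of_mul_le_mul_right hzz hz0

namespace ContinuousLinearMap

variable {𝕜 E F G : Type*} [RCLike 𝕜]
  [NormedAddCommGroup E] [InnerProductSpace 𝕜 E]
  [NormedAddCommGroup F] [InnerProductSpace 𝕜 F]
  [NormedAddCommGroup G] [InnerProductSpace 𝕜 G]

theorem injective_domRestrict_orthogonal_ker (B : G →L[𝕜] F) :
    Function.Injective ((B : G →ₗ[𝕜] F).domRestrict B.kerᗮ) :=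
  LinearMap.injective_domRestrict_iff.2 B.ker.orthogonal_disjoint.symm

theorem eq_of_mem_orthogonal_ker {B : G →L[𝕜] F} {z w : G} (hz : z ∈ B.kerᗮ) (hw : w ∈ B.kerᗮ)
    (h : B z = B w) : z = w :=
  congrArg Subtype.val (injective_domRestrict_orthogonal_ker B (a₁ := ⟨z, hz⟩) (a₂ := ⟨w, hw⟩) h)

section

variable [CompleteSpace E] [CompleteSpace F] [CompleteSpace G]

theorem closure_range_adjoint (B : G →L[𝕜] F) :
    closure (Set.range (adjoint B)) = (B.kerᗮ : Set G) := by
  rw [orthogonal_ker, Submodule.topologicalClosure_coe]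
  rfl

theorem re_inner_apply_adjoint_self (T : E →L[𝕜] F) (x : F) :
    RCLike.re (inner 𝕜 (T (adjoint T x)) x) = ‖adjoint T x‖ ^ 2 := by
  rw [← adjoint_inner_right, inner_self_eq_norm_sq]

theorem norm_adjoint_apply_le_of_comp_eq {A : E →L[𝕜] F} {B : G →L[𝕜] F} {C : E →L[𝕜] G}
    (hC : B ∘L C = A) (x : F) : ‖adjoint A x‖ ≤ ‖C‖ * ‖adjoint B x‖ := by
  rw [← hC, adjoint_comp, ← LinearIsometryEquiv.norm_map adjoint C]
  exact (adjoint C).le_opNorm _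

theorem opNorm_le_of_norm_adjoint_apply_le {A : E →L[𝕜] F} {B : G →L[𝕜] F} {C : E →L[𝕜] G}
    (hC : B ∘L C = A) (hrange : Set.range C ⊆ closure (Set.range (adjoint B))) {c : ℝ}
    (hc : 0 ≤ c) (hAB : ∀ x, ‖adjoint A x‖ ≤ c * ‖adjoint B x‖) : ‖C‖ ≤ c := by
  refine opNorm_le_bound _ hc fun y => ?_
  refine norm_le_of_mem_closure_of_norm_inner_le (𝕜 := 𝕜) (by positivity) (hrange ⟨y, rfl⟩) ?_
  rintro _ ⟨x, rfl⟩
  calc ‖inner 𝕜 (C y) (adjoint B x)‖ = ‖inner 𝕜 y (adjoint A x)‖ := by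
        rw [adjoint_inner_right, adjoint_inner_right, ← hC, comp_apply]
    _ ≤ ‖y‖ * (c * ‖adjoint B x‖) := (norm_inner_le_norm _ _).trans (by gcongr; exact hAB x)
    _ = c * ‖y‖ * ‖adjoint B x‖ := by ring

theorem isLeast_sq_opNorm_of_comp_eq {A : E →L[𝕜] F} {B : G →L[𝕜] F} {C : E →L[𝕜] G}
    (hC : B ∘L C = A) (hrange : Set.range C ⊆ closure (Set.range (adjoint B))) :
    IsLeast {μ : ℝ | 0 ≤ μ ∧ ∀ x, ‖adjoint A x‖ ^ 2 ≤ μ * ‖adjoint B x‖ ^ 2} (‖C‖ ^ 2) := by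
  refine ⟨⟨by positivity, fun x => ?_⟩, fun μ ⟨hμ, hAB⟩ => ?_⟩
  · rw [← mul_pow]
    gcongr
    exact norm_adjoint_apply_le_of_comp_eq hC x
  · refine (Real.le_sqrt (norm_nonneg C) hμ).1 (opNorm_le_of_norm_adjoint_apply_le hC hrange
      (Real.sqrt_nonneg μ) fun x => ?_)
    rw [← pow_le_pow_iff_left₀ (norm_nonneg _) (by positivity) two_ne_zero, mul_pow,
      Real.sq_sqrt hμ]
    exact hAB x

end

variable [CompleteSpace G] (A : E →L[𝕜] F) (B : G →L[𝕜] F) (h : Set.range A ⊆ Set.range B)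

theorem range_domRestrict_orthogonal_ker :
    LinearMap.range ((B : G →ₗ[𝕜] F).domRestrict B.kerᗮ) = LinearMap.range (B : G →ₗ[𝕜] F) := by
  rw [LinearMap.range_domRestrict, LinearMap.range_eq_map,
    ← B.ker.sup_orthogonal_of_hasOrthogonalProjection, Submodule.map_sup,
    LinearMap.le_ker_iff_map.mp le_rfl, bot_sup_eq]

noncomputable def douglasFactorₗ : E →ₗ[𝕜] G :=
  B.kerᗮ.subtype ∘ₗ
    (LinearEquiv.ofInjective _ (injective_domRestrict_orthogonal_ker B)).symm.toLinearMap ∘ₗ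
    (A : E →ₗ[𝕜] F).codRestrict (LinearMap.range ((B : G →ₗ[𝕜] F).domRestrict B.kerᗮ))
      fun y => by rw [range_domRestrict_orthogonal_ker]; exact h ⟨y, rfl⟩

theorem douglasFactorₗ_mem (y : E) : douglasFactorₗ A B h y ∈ B.kerᗮ := Subtype.prop _

theorem apply_douglasFactorₗ (y : E) : B (douglasFactorₗ A B h y) = A y :=
  LinearEquiv.ofInjective_symm_apply (h := injective_domRestrict_orthogonal_ker B) _
    ((A : E →ₗ[𝕜] F).codRestrict _ _ y)

variable {A B h} in
theorem eq_douglasFactorₗ_apply {y : E} {z : G} (hz : z ∈ B.kerᗮ) (hBz : B z = A y) :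
    z = douglasFactorₗ A B h y :=
  eq_of_mem_orthogonal_ker hz (douglasFactorₗ_mem A B h y) (by rw [hBz, apply_douglasFactorₗ])

theorem isClosed_graph_douglasFactorₗ : IsClosed ((douglasFactorₗ A B h).graph : Set (E × G)) := by
  have hgraph :
      ((douglasFactorₗ A B h).graph : Set (E × G)) = {p | p.2 ∈ B.kerᗮ ∧ B p.2 = A p.1} := by
    ext ⟨y, z⟩
    simp only [SetLike.mem_coe, LinearMap.mem_graph_iff, Set.mem_ofPred_eq]
    constructor
    · rintro rfl
      exact ⟨douglasFactorₗ_mem A B h y, apply_douglasFactorₗ A B h y⟩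
    · rintro ⟨hz, hBz⟩
      exact eq_douglasFactorₗ_apply hz hBz
  rw [hgraph]
  exact (B.ker.isClosed_orthogonal.preimage continuous_snd).inter
    (isClosed_eq (B.continuous.comp continuous_snd) (A.continuous.comp continuous_fst))

variable [CompleteSpace E]

noncomputable def douglasFactor : E →L[𝕜] G :=
  ofIsClosedGraph (isClosed_graph_douglasFactorₗ A B h)

theorem douglasFactor_apply (y : E) :
    douglasFactor A B h y = douglasFactorₗ A B h y := rfl

theorem comp_douglasFactor : B ∘L douglasFactor A B h = A :=
  ext (apply_douglasFactorₗ A B h)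

theorem ker_douglasFactor : (douglasFactor A B h).ker = A.ker := by
  ext y
  simp only [LinearMap.mem_ker, coe_coe, douglasFactor_apply]
  constructor
  · intro hy
    rw [← apply_douglasFactorₗ A B h y, hy, map_zero]
  · intro hy
    exact (eq_douglasFactorₗ_apply (zero_mem _) (by rw [map_zero, hy])).symm

variable [CompleteSpace F]

theorem range_douglasFactor_subset :
    Set.range (douglasFactor A B h) ⊆ closure (Set.range (adjoint B)) := by
  rw [closure_range_adjoint]
  rintro _ ⟨y, rfl⟩
  exact douglasFactorₗ_mem A B h y

variable {A B} in
theorem eq_douglasFactor {C : E →L[𝕜] G} (hC : B ∘L C = A)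
    (hrange : Set.range C ⊆ closure (Set.range (adjoint B))) : C = douglasFactor A B h := by
  rw [closure_range_adjoint] at hrange
  ext y
  exact eq_douglasFactorₗ_apply (h := h) (hrange ⟨y, rfl⟩) (by rw [← hC]; rfl)

theorem isLeast_sq_opNorm_douglasFactor :
    IsLeast {μ : ℝ | 0 ≤ μ ∧ ∀ x, ‖adjoint A x‖ ^ 2 ≤ μ * ‖adjoint B x‖ ^ 2}
      (‖douglasFactor A B h‖ ^ 2) :=
  isLeast_sq_opNorm_of_comp_eq (comp_douglasFactor A B h) (range_douglasFactor_subset A B h)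

end ContinuousLinearMap

variable {H : Type*} [NormedAddCommGroup H] [InnerProductSpace ℂ H] [CompleteSpace H]

/-- Douglas' theorem, full form: if `range A ⊆ range B` then there is a unique
bounded `C` with `A = BC`, `null C = null A` and `range C ⊆ closure (range B*)`;
moreover `‖C‖² = inf {μ ≥ 0 | AA* ≤ μ BB*}`. -/
theorem douglas_factorization_unique (A B : H →L[ℂ] H)
    (h : Set.range A ⊆ Set.range B) :
    ∃ C : H →L[ℂ] H,
      (A = B.comp C ∧ LinearMap.ker (C : H →ₗ[ℂ] H) = LinearMap.ker (A : H →ₗ[ℂ] H) ∧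
        Set.range C ⊆ closure (Set.range (ContinuousLinearMap.adjoint B))) ∧
      ‖C‖ ^ 2 = sInf {μ : ℝ | 0 ≤ μ ∧ ∀ x : H,
        (@inner ℂ _ _ (A (ContinuousLinearMap.adjoint A x)) x).re ≤
          μ * (@inner ℂ _ _ (B (ContinuousLinearMap.adjoint B x)) x).re} ∧
      ∀ C' : H →L[ℂ] H,
        (A = B.comp C' ∧ LinearMap.ker (C' : H →ₗ[ℂ] H) = LinearMap.ker (A : H →ₗ[ℂ] H) ∧
          Set.range C' ⊆ closure (Set.range (ContinuousLinearMap.adjoint B))) →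
        C' = C := by
  refine ⟨A.douglasFactor B h,
    ⟨(A.comp_douglasFactor B h).symm, A.ker_douglasFactor B h, A.range_douglasFactor_subset B h⟩,
    ?_, fun C' ⟨hC', _, hrange⟩ => ContinuousLinearMap.eq_douglasFactor h hC'.symm hrange⟩
  simp only [← RCLike.re_to_complex, ContinuousLinearMap.re_inner_apply_adjoint_self]
  exact (A.isLeast_sq_opNorm_douglasFactor B h).csInf_eq.symm
end

section
/- Let A be a closed densely defined operator from H₁ to H₂ and B = A† its Moore–Penrose inverse. Then (I + A*A)⁻¹ + (I + BB*)⁻¹ = I + P, where P is the orthogonal projection onto null(B*). -/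
/-! For `x ∈ H₁` put `u = (I + A*A)⁻¹ x`, so that `x = u + A*Au`. We show
`(I + BB*)⁻¹ x = A*Au + Px`, which gives the theorem after adding `u`.

* `Au ∈ closure R(A)` and `AB ⊆ P_{closure R(A)}` give `A*Au ∈ D(B*)` with `B*A*Au = Au`.
* `N(B*) = R(B)ᗮ`, and since `A` is closed, `R(B)ᗮ ⊆ N(A)`. Hence `x - (u - BAu) = A*Au + BAu`
  is orthogonal to `N(B*)`, while `u - BAu ∈ R(B)ᗮ = N(B*)`; so `Px = u - BAu`.
* Then `w = A*Au + Px` has `B*w = Au` and `w + BB*w = A*Au + u = x`, and `I + BB*` is injective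
  because `⟪y, (I + BB*) y⟫ = ‖y‖² + ‖B*y‖²`. -/

variable {H₁ H₂ : Type*}
  [NormedAddCommGroup H₁] [InnerProductSpace ℂ H₁] [CompleteSpace H₁]
  [NormedAddCommGroup H₂] [InnerProductSpace ℂ H₂] [CompleteSpace H₂]

/-- `B` is the Moore–Penrose inverse of the closed densely defined operator `A`:
`B` is closed, `D(B) = R(A) ⊕ N(A*)`, `N(B) = N(A*)`, `ABA = A`, `BAB = B`,
`AB ⊆ P_{closure R(A)}` and `BA ⊆ P_{closure R(B)}`. -/
def IsMPInv (A : H₁ →ₗ.[ℂ] H₂) (B : H₂ →ₗ.[ℂ] H₁) : Prop :=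
  B.IsClosed ∧
  (∀ y : H₂, y ∈ B.domain ↔
    ∃ (x : A.domain) (z : A.adjoint.domain), A.adjoint z = 0 ∧ y = A x + ↑z) ∧
  (∀ (y : H₂) (hy : y ∈ B.domain), B ⟨y, hy⟩ = 0 ↔
    ∃ hy' : y ∈ A.adjoint.domain, A.adjoint ⟨y, hy'⟩ = 0) ∧
  (∀ x : A.domain, A x ∈ B.domain) ∧
  (∀ y : B.domain, (B y : H₁) ∈ A.domain) ∧
  (∀ (x : A.domain) (h1 : A x ∈ B.domain) (h2 : B ⟨A x, h1⟩ ∈ A.domain),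
    A ⟨B ⟨A x, h1⟩, h2⟩ = A x) ∧
  (∀ (y : B.domain) (h1 : (B y : H₁) ∈ A.domain) (h2 : A ⟨B y, h1⟩ ∈ B.domain),
    B ⟨A ⟨B y, h1⟩, h2⟩ = B y) ∧
  (∀ (y : B.domain) (h : (B y : H₁) ∈ A.domain),
    A ⟨B y, h⟩ ∈ (LinearMap.range A.toFun).topologicalClosure ∧
      (y : H₂) - A ⟨B y, h⟩ ∈ ((LinearMap.range A.toFun).topologicalClosure)ᗮ) ∧
  (∀ (x : A.domain) (h : (A x : H₂) ∈ B.domain),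
    B ⟨A x, h⟩ ∈ (LinearMap.range B.toFun).topologicalClosure ∧
      (x : H₁) - B ⟨A x, h⟩ ∈ ((LinearMap.range B.toFun).topologicalClosure)ᗮ)


namespace LinearPMap

section Ker

variable {R E F : Type*} [Ring R] [AddCommGroup E] [Module R E] [AddCommGroup F] [Module R F]

def ker (T : E →ₗ.[R] F) : Submodule R E :=
  (LinearMap.ker T.toFun).map T.domain.subtype

theorem mem_ker {T : E →ₗ.[R] F} {x : E} : x ∈ T.ker ↔ ∃ h : x ∈ T.domain, T ⟨x, h⟩ = 0 := by
  simp [ker]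

theorem mem_ker_iff_mem_graph {T : E →ₗ.[R] F} {x : E} : x ∈ T.ker ↔ (x, 0) ∈ T.graph := by
  simp only [mem_ker, mem_graph_iff, Subtype.exists]
  exact ⟨fun ⟨h, h0⟩ => ⟨x, h, rfl, h0⟩, fun ⟨_, h, rfl, h0⟩ => ⟨h, h0⟩⟩

end Ker

theorem IsClosed.isClosed_ker {R E F : Type*} [CommRing R] [AddCommGroup E] [Module R E]
    [AddCommGroup F] [Module R F] [TopologicalSpace E] [TopologicalSpace F] {T : E →ₗ.[R] F}
    (hT : T.IsClosed) : _root_.IsClosed (T.ker : Set E) := by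
  have : (T.ker : Set E) = (fun x => (x, (0 : F))) ⁻¹' T.graph := by
    ext x
    exact mem_ker_iff_mem_graph
  rw [this]
  exact hT.preimage (by fun_prop)

variable {𝕜 E F : Type*} [RCLike 𝕜]
  [NormedAddCommGroup E] [InnerProductSpace 𝕜 E] [NormedAddCommGroup F] [InnerProductSpace 𝕜 F]

local notation "⟪" x ", " y "⟫" => inner 𝕜 x y

theorem IsClosed.orthogonal_le_ker {T : E →ₗ.[𝕜] F} (hT : T.IsClosed)
    (hTd : Dense (T.domain : Set E)) (K : Submodule 𝕜 E) [K.HasOrthogonalProjection]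
    (h : ∀ x ∈ T.domain, x - K.starProjection x ∈ T.ker) : Kᗮ ≤ T.ker := by
  intro x hx
  have := map_mem_closure (continuous_id.sub K.starProjection.continuous) (hTd x) h
  rwa [hT.isClosed_ker.closure_eq, Pi.sub_apply, id, K.starProjection_apply_eq_zero_iff.mpr hx,
    sub_zero] at this

variable [CompleteSpace E] {T : E →ₗ.[𝕜] F}

theorem ker_adjoint (hT : Dense (T.domain : Set E)) : T†.ker = (LinearMap.range T.toFun)ᗮ := by
  ext y
  rw [mem_ker, Submodule.mem_orthogonal]
  constructor
  · rintro ⟨hy, hy0⟩ _ ⟨x, rfl⟩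
    change ⟪T x, y⟫ = 0
    rw [inner_eq_zero_symm, ← adjoint_isFormalAdjoint hT ⟨y, hy⟩ x, hy0, inner_zero_left]
  · intro h
    have hx₀ : ∀ x : T.domain, ⟪(0 : E), x⟫ = ⟪y, T x⟫ := fun x => by
      rw [inner_zero_left, eq_comm, inner_eq_zero_symm]
      exact h _ ⟨x, rfl⟩
    have hy := mem_adjoint_domain_of_exists y ⟨0, hx₀⟩
    exact ⟨hy, adjoint_apply_eq hT ⟨y, hy⟩ hx₀⟩

theorem apply_mem_orthogonal_ker_adjoint (hT : Dense (T.domain : Set E)) (x : T.domain) :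
    (T x : F) ∈ T†.kerᗮ := by
  rw [ker_adjoint hT]
  exact Submodule.le_orthogonal_orthogonal _ ⟨x, rfl⟩

theorem adjoint_apply_mem_orthogonal_ker (hT : Dense (T.domain : Set E)) (y : T†.domain) :
    (T† y : E) ∈ T.kerᗮ := by
  rw [Submodule.mem_orthogonal']
  intro x hx
  obtain ⟨hx, hx0⟩ := mem_ker.mp hx
  rw [adjoint_isFormalAdjoint hT y ⟨x, hx⟩, hx0, inner_zero_right]

/-- Injectivity of `I + T T†`, from `⟪y, (I + T T†) y⟫ = ‖y‖² + ‖T† y‖²`. -/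
theorem eq_of_add_apply_adjoint_eq (hT : Dense (T.domain : Set E)) {y₁ y₂ : T†.domain}
    {x₁ x₂ : T.domain} (h₁ : T† y₁ = x₁) (h₂ : T† y₂ = x₂) (h : (y₁ : F) + T x₁ = y₂ + T x₂) :
    y₁ = y₂ := by
  set y := y₁ - y₂
  have hy : T† y = (x₁ - x₂ : T.domain) := by
    rw [map_sub, h₁, h₂]
    rfl
  have hsum : (y : F) + T (x₁ - x₂) = 0 := by
    rw [map_sub, Submodule.coe_sub, sub_add_sub_comm, h, sub_self]
  have hnorm : ‖(y : F)‖ ^ 2 + ‖T† y‖ ^ 2 = 0 := by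
    have h0 : ⟪(y : F), y⟫ + ⟪T† y, T† y⟫ = 0 := by
      nth_rw 2 [hy]
      rw [adjoint_isFormalAdjoint hT y, ← inner_add_right, hsum, inner_zero_right]
    rw [inner_self_eq_norm_sq_to_K, inner_self_eq_norm_sq_to_K] at h0
    exact_mod_cast h0
  have : ‖(y : F)‖ = 0 := by nlinarith [sq_nonneg ‖(y : F)‖, sq_nonneg ‖T† y‖]
  rwa [norm_eq_zero, Submodule.coe_eq_zero, sub_eq_zero] at this

end LinearPMap

theorem Submodule.eq_of_sub_mem_orthogonal {𝕜 E : Type*} [RCLike 𝕜] [NormedAddCommGroup E]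
    [InnerProductSpace 𝕜 E] {K : Submodule 𝕜 E} {x p q : E} (hp : p ∈ K) (hq : q ∈ K)
    (hxp : x - p ∈ Kᗮ) (hxq : x - q ∈ Kᗮ) : p = q := by
  have h : p - q ∈ K ⊓ Kᗮ := ⟨K.sub_mem hp hq, by simpa using Kᗮ.sub_mem hxq hxp⟩
  rwa [K.inf_orthogonal_eq_bot, Submodule.mem_bot, sub_eq_zero] at h

open LinearPMap

namespace IsMPInv

variable {A : H₁ →ₗ.[ℂ] H₂} {B : H₂ →ₗ.[ℂ] H₁}

omit [CompleteSpace H₂] in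
theorem apply_mem_domain (hB : IsMPInv A B) (x : A.domain) : (A x : H₂) ∈ B.domain :=
  hB.2.2.2.1 x

theorem dense_domain (hB : IsMPInv A B) (hAd : Dense (A.domain : Set H₁)) :
    Dense (B.domain : Set H₂) := by
  obtain ⟨-, hBdom, -, hABdom, -⟩ := hB
  rw [Submodule.dense_iff_topologicalClosure_eq_top, Submodule.topologicalClosure_eq_top_iff,
    Submodule.eq_bot_iff]
  intro y hy
  have hrange : LinearMap.range A.toFun ≤ B.domain := by
    rintro _ ⟨x, rfl⟩
    exact hABdom x
  obtain ⟨hyA, hyA0⟩ := mem_ker.mp ((ker_adjoint hAd).ge (Submodule.orthogonal_le hrange hy))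
  have hyB : y ∈ B.domain := (hBdom y).mpr ⟨0, ⟨y, hyA⟩, hyA0, by simp⟩
  exact inner_self_eq_zero.mp ((Submodule.mem_orthogonal _ _).mp hy y hyB)

theorem sub_apply_apply_mem_ker_adjoint (hB : IsMPInv A B) (hAd : Dense (A.domain : Set H₁))
    (x : A.domain) (hx : (A x : H₂) ∈ B.domain) : (x : H₁) - B ⟨A x, hx⟩ ∈ B†.ker := by
  rw [ker_adjoint (hB.dense_domain hAd), ← Submodule.orthogonal_closure]
  obtain ⟨-, -, -, -, -, -, -, -, hBAproj⟩ := hB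
  exact (hBAproj x hx).2

/-- Here the closedness of `A` enters: `I - P_{closure R(B)}` maps `D(A)` into `N(A)`, which is
closed, hence maps all of `H₁` into `N(A)`. -/
theorem ker_adjoint_le_ker (hB : IsMPInv A B) (hA : A.IsClosed)
    (hAd : Dense (A.domain : Set H₁)) : B†.ker ≤ A.ker := by
  rw [ker_adjoint (hB.dense_domain hAd), ← Submodule.orthogonal_closure]
  refine hA.orthogonal_le_ker hAd _ fun x hx => ?_
  obtain ⟨-, -, -, hABdom, hBAdom, hABA, -, -, hBAproj⟩ := hB
  have hAx := hABdom ⟨x, hx⟩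
  rw [Submodule.eq_starProjection_of_mem_orthogonal (hBAproj _ hAx).1 (hBAproj _ hAx).2, mem_ker]
  refine ⟨sub_mem hx (hBAdom _), ?_⟩
  rw [show (⟨x - B ⟨A ⟨x, hx⟩, hAx⟩, _⟩ : A.domain) = ⟨x, hx⟩ - ⟨_, hBAdom _⟩ from rfl,
    LinearPMap.map_sub, hABA, sub_self]

theorem adjoint_apply_add_apply_mem_orthogonal_ker_adjoint (hB : IsMPInv A B)
    (hA : A.IsClosed) (hAd : Dense (A.domain : Set H₁)) (v : A†.domain) (x : B.domain) :
    (A† v : H₁) + B x ∈ B†.kerᗮ :=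
  add_mem
    (Submodule.orthogonal_le (hB.ker_adjoint_le_ker hA hAd)
      (adjoint_apply_mem_orthogonal_ker hAd v))
    (apply_mem_orthogonal_ker_adjoint (hB.dense_domain hAd) x)

theorem exists_adjoint_apply_adjoint_eq (hB : IsMPInv A B) (hAd : Dense (A.domain : Set H₁))
    (v : A†.domain) (hv : (v : H₂) ∈ (LinearMap.range A.toFun).topologicalClosure) :
    ∃ h : (A† v : H₁) ∈ B†.domain, B† ⟨A† v, h⟩ = v := by
  have hBd := hB.dense_domain hAd
  obtain ⟨-, -, -, -, hBAdom, -, -, hABproj, -⟩ := hB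
  have key : ∀ d : B.domain, inner ℂ (v : H₂) d = inner ℂ (A† v) (B d) := fun d => by
    rw [adjoint_isFormalAdjoint hAd v ⟨B d, hBAdom d⟩, ← sub_eq_zero, ← inner_sub_right]
    exact (Submodule.mem_orthogonal _ _).mp (hABproj d (hBAdom d)).2 _ hv
  exact ⟨mem_adjoint_domain_of_exists _ ⟨v, key⟩, adjoint_apply_eq hBd _ key⟩

end IsMPInv

/-- For a closed densely defined `A` with Moore–Penrose inverse `B`,
`(I + A*A)⁻¹ + (I + BB*)⁻¹ = I + P` where `P` is the orthogonal projection
onto `null B*`. -/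
theorem pmap_resolvent_sum
    (A : H₁ →ₗ.[ℂ] H₂) (B : H₂ →ₗ.[ℂ] H₁)
    (hA : A.IsClosed) (hAd : Dense (A.domain : Set H₁))
    (hB : IsMPInv A B)
    (RA : H₁ →L[ℂ] H₁)
    (hRA1 : ∀ x : H₁, RA x ∈ A.domain)
    (hRA2 : ∀ (x : H₁) (h1 : RA x ∈ A.domain), A ⟨RA x, h1⟩ ∈ A.adjoint.domain)
    (hRA : ∀ (x : H₁) (h1 : RA x ∈ A.domain) (h2 : A ⟨RA x, h1⟩ ∈ A.adjoint.domain),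
      RA x + A.adjoint ⟨A ⟨RA x, h1⟩, h2⟩ = x)
    (RB : H₁ →L[ℂ] H₁)
    (hRB1 : ∀ x : H₁, RB x ∈ B.adjoint.domain)
    (hRB2 : ∀ (x : H₁) (h1 : RB x ∈ B.adjoint.domain), B.adjoint ⟨RB x, h1⟩ ∈ B.domain)
    (hRB : ∀ (x : H₁) (h1 : RB x ∈ B.adjoint.domain) (h2 : B.adjoint ⟨RB x, h1⟩ ∈ B.domain),
      RB x + B ⟨B.adjoint ⟨RB x, h1⟩, h2⟩ = x)
    (P : H₁ →L[ℂ] H₁)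
    (hP1 : ∀ x : H₁, ∃ h : P x ∈ B.adjoint.domain, B.adjoint ⟨P x, h⟩ = 0)
    (hP2 : ∀ (x y : H₁) (hy : y ∈ B.adjoint.domain),
      B.adjoint ⟨y, hy⟩ = 0 → @inner ℂ _ _ (x - P x) y = 0) :
    RA + RB = 1 + P := by
  ext x
  set u : A.domain := ⟨RA x, hRA1 x⟩
  set v : A†.domain := ⟨A u, hRA2 x _⟩
  have hx : RA x + A† v = x := hRA x _ _
  have hAu := hB.apply_mem_domain u
  obtain ⟨hPx, hBPx⟩ := hP1 x
  have hPx_eq : P x = u - B ⟨A u, hAu⟩ := by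
    refine Submodule.eq_of_sub_mem_orthogonal (x := x) (mem_ker.mpr ⟨hPx, hBPx⟩)
      (hB.sub_apply_apply_mem_ker_adjoint hAd u hAu)
      ((Submodule.mem_orthogonal' _ _).mpr fun y hy => (mem_ker.mp hy).elim (hP2 x y)) ?_
    rw [show x - (u - B ⟨A u, hAu⟩) = A† v + B ⟨A u, hAu⟩ by rw [← hx]; abel]
    exact hB.adjoint_apply_add_apply_mem_orthogonal_ker_adjoint hA hAd v _
  obtain ⟨hw, hBw⟩ := hB.exists_adjoint_apply_adjoint_eq hAd v (subset_closure ⟨u, rfl⟩)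
  have hBw' : B† ⟨A† v + P x, add_mem hw hPx⟩ = A u := by
    rw [show (⟨A† v + P x, _⟩ : B†.domain) = ⟨A† v, hw⟩ + ⟨P x, hPx⟩ from rfl,
      LinearPMap.map_add, hBw, hBPx, add_zero]
  have hRBx : RB x = A† v + P x := by
    refine congrArg Subtype.val (eq_of_add_apply_adjoint_eq (hB.dense_domain hAd)
      (y₁ := ⟨RB x, hRB1 x⟩) (x₁ := ⟨_, hRB2 x (hRB1 x)⟩) (x₂ := ⟨A u, hAu⟩) rfl hBw' ?_)
    rw [hRB x]
    change x = A† v + P x + B ⟨A u, hAu⟩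
    rw [hPx_eq, ← hx]
    abel
  change RA x + RB x = x + P x
  rw [hRBx, ← add_assoc, hx]
end

section
/- Let A be a bounded operator from H₁ to H₂ and B its Moore–Penrose inverse. Then A admits the decomposition A = (I + B*B)^{-1/2} T_{B*}, where T_{B*} = B*(I + BB*)^{-1/2} + A(I + BB*)^{-1/2}. -/
/-!
With `T = B* + A`, the Moore–Penrose identities give `A (1 + B B*) = T = (1 + B* B) A`, hence
`T S₁² = A = S₂² T`. Positive square roots intertwine as their squares do, so `S₂ T = T S₁` and
`A = S₂ (S₂ T) = S₂ T S₁`.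
-/

open ContinuousLinearMap

variable {H₁ H₂ : Type*}
  [NormedAddCommGroup H₁] [InnerProductSpace ℂ H₁] [CompleteSpace H₁]
  [NormedAddCommGroup H₂] [InnerProductSpace ℂ H₂] [CompleteSpace H₂]

/-- `B` is the Moore–Penrose inverse of the bounded operator `A`:
`ABA = A`, `BAB = B`, `AB` is the orthogonal projection onto `range A` and
`BA` is the orthogonal projection onto `range B`. -/
def IsMP (A : H₁ →L[ℂ] H₂) (B : H₂ →L[ℂ] H₁) : Prop :=
  A.comp (B.comp A) = A ∧ B.comp (A.comp B) = B ∧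
  (∀ y : H₂, y - A (B y) ∈ (LinearMap.range (A : H₁ →ₗ[ℂ] H₂))ᗮ) ∧
  (∀ x : H₁, x - B (A x) ∈ (LinearMap.range (B : H₂ →ₗ[ℂ] H₁))ᗮ)

open scoped InnerProductSpace

namespace ContinuousLinearMap

/- `W = D* D` commutes with `Q` and `W Q = -D* P D ≤ 0`; since commuting positive operators have a
positive product, `W Q = 0`. -/
lemma eq_zero_of_comp_add_comp_eq_zero {P : H₂ →L[ℂ] H₂} {Q : H₁ →L[ℂ] H₁}
    (hP : P.IsPositive) (hQ : Q.IsPositive) (hQu : IsUnit Q) {D : H₁ →L[ℂ] H₂}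
    (hD : P ∘L D + D ∘L Q = 0) : D = 0 := by
  have hDadj : adjoint D ∘L P + Q ∘L adjoint D = 0 := by
    simpa [adjoint_comp, hP.isSelfAdjoint.adjoint_eq, hQ.isSelfAdjoint.adjoint_eq, add_comm]
      using congrArg adjoint hD
  set W : H₁ →L[ℂ] H₁ := adjoint D ∘L D
  have hWQ : W * Q = -(adjoint D ∘L P ∘L D) := by
    rw [mul_def, comp_assoc, eq_neg_of_add_eq_zero_right hD, comp_neg]
  have hQW : Q * W = -(adjoint D ∘L P ∘L D) := by
    rw [mul_def, ← comp_assoc, eq_neg_of_add_eq_zero_right hDadj, neg_comp, comp_assoc]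
  have hWQ₀ : W * Q = 0 := by
    have hcomm : Commute W Q := hWQ.trans hQW.symm
    refine le_antisymm ?_ (hcomm.mul_nonneg ?_ ((nonneg_iff_isPositive Q).mpr hQ))
    · rw [hWQ, neg_nonpos, nonneg_iff_isPositive]
      exact hP.adjoint_conj D
    · exact (nonneg_iff_isPositive W).mpr (isPositive_adjoint_comp_self D)
  have hW : W = 0 := hQu.mul_left_eq_zero.mp hWQ₀
  have hnorm : ‖D‖ * ‖D‖ = 0 := by
    rw [← norm_adjoint_comp_self, ← norm_zero (E := H₁ →L[ℂ] H₁), ← hW]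
  exact norm_eq_zero.mp (mul_self_eq_zero.mp hnorm)

lemma comp_eq_comp_of_sq_comp_eq_comp_sq {S₁ : H₁ →L[ℂ] H₁} {S₂ : H₂ →L[ℂ] H₂}
    (hS₁ : S₁.IsPositive) (hS₁u : IsUnit S₁) (hS₂ : S₂.IsPositive) {T : H₁ →L[ℂ] H₂}
    (h : (S₂ ∘L S₂) ∘L T = T ∘L (S₁ ∘L S₁)) : S₂ ∘L T = T ∘L S₁ := by
  refine sub_eq_zero.mp (eq_zero_of_comp_add_comp_eq_zero hS₂ hS₁ hS₁u ?_)
  rw [comp_sub, sub_comp, ← comp_assoc S₂ S₂, h, comp_assoc S₂ T S₁, comp_assoc T S₁ S₁]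
  abel

lemma isSelfAdjoint_comp_of_sub_mem_orthogonal_range {𝕜 E F : Type*} [RCLike 𝕜]
    [NormedAddCommGroup E] [InnerProductSpace 𝕜 E]
    [NormedAddCommGroup F] [InnerProductSpace 𝕜 F] [CompleteSpace F]
    {A : E →L[𝕜] F} {B : F →L[𝕜] E}
    (h : ∀ y, y - A (B y) ∈ (LinearMap.range (A : E →ₗ[𝕜] F))ᗮ) : IsSelfAdjoint (A ∘L B) := by
  have hinner : ∀ u v, ⟪A (B u), v⟫_𝕜 = ⟪A (B u), A (B v)⟫_𝕜 := fun u v => by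
    rw [← sub_eq_zero, ← inner_sub_right]
    exact Submodule.inner_right_of_mem_orthogonal (LinearMap.mem_range_self _ (B u)) (h v)
  refine isSelfAdjoint_iff'.mpr ((eq_adjoint_iff _ _).mpr fun u v => ?_).symm
  simp only [comp_apply]
  rw [hinner, ← inner_conj_symm, ← hinner, inner_conj_symm]

end ContinuousLinearMap

namespace IsMP

variable {A : H₁ →L[ℂ] H₂} {B : H₂ →L[ℂ] H₁}

lemma comp_comp_adjoint (h : IsMP A B) : A ∘L B ∘L adjoint B = adjoint B := by
  rw [← comp_assoc, ← (isSelfAdjoint_comp_of_sub_mem_orthogonal_range h.2.2.1).adjoint_eq,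
    ← adjoint_comp, h.2.1]

lemma adjoint_comp_comp (h : IsMP A B) : adjoint B ∘L B ∘L A = adjoint B := by
  rw [← (isSelfAdjoint_comp_of_sub_mem_orthogonal_range h.2.2.2).adjoint_eq, ← adjoint_comp,
    comp_assoc, h.2.1]

lemma comp_one_add_comp_adjoint (h : IsMP A B) : A ∘L (1 + B ∘L adjoint B) = adjoint B + A := by
  rw [comp_add, h.comp_comp_adjoint, one_def, comp_id, add_comm]

lemma one_add_adjoint_comp_comp (h : IsMP A B) : (1 + adjoint B ∘L B) ∘L A = adjoint B + A := by
  rw [add_comp, comp_assoc, h.adjoint_comp_comp, one_def, id_comp, add_comm]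

end IsMP

theorem mp_decomposition_general (A : H₁ →L[ℂ] H₂) (B : H₂ →L[ℂ] H₁)
    (hB : IsMP A B)
    (S₁ : H₁ →L[ℂ] H₁) (hS₁pos : S₁.IsPositive)
    (hS₁a : (S₁.comp S₁).comp (1 + B.comp (adjoint B)) = 1)
    (hS₁b : (1 + B.comp (adjoint B)).comp (S₁.comp S₁) = 1)
    (S₂ : H₂ →L[ℂ] H₂) (hS₂pos : S₂.IsPositive)
    (hS₂a : (S₂.comp S₂).comp (1 + (adjoint B).comp B) = 1) :
    A = S₂.comp ((adjoint B).comp S₁ + A.comp S₁) := by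
  have hS₁u : IsUnit S₁ := isUnit_iff_exists_and_exists.mpr
    ⟨⟨S₁ * (1 + B ∘L adjoint B), by rw [← mul_assoc]; exact hS₁a⟩,
      ⟨(1 + B ∘L adjoint B) * S₁, by rw [mul_assoc]; exact hS₁b⟩⟩
  have hA₁ : (adjoint B + A) ∘L (S₁ ∘L S₁) = A := by
    rw [← hB.comp_one_add_comp_adjoint, comp_assoc, hS₁b, one_def, comp_id]
  have hA₂ : (S₂ ∘L S₂) ∘L (adjoint B + A) = A := by
    rw [← hB.one_add_adjoint_comp_comp, ← comp_assoc, hS₂a, one_def, id_comp]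
  have hS : S₂ ∘L (adjoint B + A) = (adjoint B + A) ∘L S₁ :=
    comp_eq_comp_of_sq_comp_eq_comp_sq hS₁pos hS₁u hS₂pos (hA₂.trans hA₁.symm)
  calc A = S₂ ∘L (S₂ ∘L (adjoint B + A)) := by rw [← comp_assoc, hA₂]
    _ = S₂ ∘L (adjoint B ∘L S₁ + A ∘L S₁) := by rw [hS, add_comp]

/-- For a bounded `A` with Moore–Penrose inverse `B`, `A` admits the
decomposition `A = (I + B*B)^{-1/2} T_{B*}` with
`T_{B*} = B*(I + BB*)^{-1/2} + A(I + BB*)^{-1/2}`. -/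
theorem mp_decomposition (A : H₁ →L[ℂ] H₂) (B : H₂ →L[ℂ] H₁)
    (hB : IsMP A B)
    (S₁ : H₁ →L[ℂ] H₁) (hS₁pos : S₁.IsPositive)
    (hS₁a : (S₁.comp S₁).comp (1 + B.comp (adjoint B)) = 1)
    (hS₁b : (1 + B.comp (adjoint B)).comp (S₁.comp S₁) = 1)
    (S₂ : H₂ →L[ℂ] H₂) (hS₂pos : S₂.IsPositive)
    (hS₂a : (S₂.comp S₂).comp (1 + (adjoint B).comp B) = 1)
    (hS₂b : (1 + (adjoint B).comp B).comp (S₂.comp S₂) = 1) :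
    A = S₂.comp ((adjoint B).comp S₁ + A.comp S₁) :=
  mp_decomposition_general A B hB S₁ hS₁pos hS₁a hS₁b S₂ hS₂pos hS₂a
end
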